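/- Let Γ be a finite undirected simple graph that is the disjoint union of graphs Γ^(1),…,Γ^(k), with vertices x_j^(i) for j = 1,…,n^(i). Let x = ∏_{i,j} (x_j^(i))^{z_j^(i)} · ∏_{l=1}^N y_l^{t_l} ∈ G_Γ and suppose there are components i_1 ≠ i_2 and indices j_1, j_2 with z_{j_1}^{(i_1)} ≠ 0 and z_{j_2}^{(i_2)} ≠ 0. Then, with d := gcd of all the z_j^(i), the centralizer of x in G_Γ equals the internal direct product ⟨ ∏_{i,j} (x_j^(i))^{z_j^(i)/d} ⟩ × γ_2(G_Γ), and this centralizer is free abelian of rank N+1. -/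

import Mathlib

/-- Non-adjacent pairs `(i,j)` with `i < j`. -/
abbrev NonEdge {V : Type} [LinearOrder V] (Γ : SimpleGraph V) : Type :=
  {p : V × V // p.1 < p.2 ∧ ¬ Γ.Adj p.1 p.2}

abbrev GraphGens {V : Type} [LinearOrder V] (Γ : SimpleGraph V) : Type := V ⊕ NonEdge Γ

open scoped commutatorElement

/-- The relations of the 2-step nilpotent group associated to a graph. -/
def GraphRels {V : Type} [LinearOrder V] (Γ : SimpleGraph V) : Set (FreeGroup (GraphGens Γ)) :=
  {r | (∃ i j : V, Γ.Adj i j ∧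
      r = ⁅(FreeGroup.of (Sum.inl j) : FreeGroup (GraphGens Γ)), FreeGroup.of (Sum.inl i)⁆) ∨
    (∃ p : NonEdge Γ,
      r = ⁅(FreeGroup.of (Sum.inl p.1.2) : FreeGroup (GraphGens Γ)), FreeGroup.of (Sum.inl p.1.1)⁆ *
        (FreeGroup.of (Sum.inr p))⁻¹) ∨
    (∃ (l : V) (p : NonEdge Γ),
      r = ⁅(FreeGroup.of (Sum.inl l) : FreeGroup (GraphGens Γ)), FreeGroup.of (Sum.inr p)⁆)}

/-- The 2-step nilpotent group associated to a graph. -/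
abbrev GraphGroup {V : Type} [LinearOrder V] (Γ : SimpleGraph V) : Type :=
  PresentedGroup (GraphRels Γ)

/-- The generator of `GraphGroup Γ` corresponding to the vertex `i`. -/
def xg {V : Type} [LinearOrder V] (Γ : SimpleGraph V) (i : V) : GraphGroup Γ :=
  PresentedGroup.of (Sum.inl i)

/-- The central generator of `GraphGroup Γ` corresponding to a non-adjacent pair. -/
def yg {V : Type} [LinearOrder V] (Γ : SimpleGraph V) (p : NonEdge Γ) : GraphGroup Γ :=
  PresentedGroup.of (Sum.inr p)

/-- Twisted conjugacy: `a = c * b * (φ c)⁻¹` for some `c`. -/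
def TwistedConj {G : Type*} [Group G] (φ : G →* G) (a b : G) : Prop :=
  ∃ c : G, a = c * b * (φ c)⁻¹

/-- The Reidemeister number of an endomorphism: the number of twisted conjugacy
classes, as an element of `ℕ∞`. -/
noncomputable def reidemeisterNumber {G : Type*} [Group G] (φ : G →* G) : ℕ∞ :=
  ENat.card (Quot (TwistedConj φ))

/-- The Reidemeister spectrum of a group. -/
noncomputable def reidemeisterSpectrum (G : Type*) [Group G] : Set ℕ∞ :=
  {r : ℕ∞ | ∃ φ : G ≃* G, r = reidemeisterNumber φ.toMonoidHom}

/-- `|x|_∞ : ℤ → ℕ∞`. -/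
def natAbsInfty (x : ℤ) : ℕ∞ := if x = 0 then ⊤ else (x.natAbs : ℕ∞)

/-- A graph is a (simplicial) join if its vertex set can be partitioned in two
nonempty parts such that all pairs of vertices in different parts are adjacent. -/
def IsJoinGraph {V : Type*} (Γ : SimpleGraph V) : Prop :=
  ∃ A B : Set V, A.Nonempty ∧ B.Nonempty ∧ Disjoint A B ∧ A ∪ B = Set.univ ∧
    ∀ a ∈ A, ∀ b ∈ B, Γ.Adj a b

/-!
The exponent-sum map `G_Γ → ℤ^V` is the abelianisation; its kernel `γ₂(G_Γ)` is generated by the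
central elements `y_p`, which are independent, as an explicit central extension of `ℤ^V` by
`ℤ^{non-edges}` shows. In that model, `u` commutes with `x` exactly when the exponent vectors `a`
of `u` and `z` of `x` satisfy `a_i z_j = a_j z_i` for every non-edge `{i, j}`. Vertices in different
components are never adjacent, so when `z` is nonzero in two components this forces `a` to be
proportional to `z`, i.e. an integer multiple of `z / d`. Hence the centralizer is `⟨g⟩ · γ₂(G_Γ)`,
and the product is direct since `g` has infinite order modulo `γ₂(G_Γ)`.
-/

section

variable {G : Type*} [Group G]

lemma Subgroup.normal_of_le_center {N : Subgroup G} (h : N ≤ Subgroup.center G) : N.Normal :=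
  ⟨fun n hn g => by rwa [Subgroup.mem_center_iff.mp (h hn) g, mul_inv_cancel_right]⟩

lemma commutator_le_of_closure_eq_top {S : Set G} (hS : Subgroup.closure S = ⊤)
    (N : Subgroup G) [N.Normal] (h : ∀ s ∈ S, ∀ t ∈ S, ⁅s, t⁆ ∈ N) : commutator G ≤ N := by
  let π := QuotientGroup.mk' N
  have hπ : ∀ a b : G, Commute (π a) (π b) := by
    intro a b
    have ha : a ∈ Subgroup.closure S := hS ▸ Subgroup.mem_top a
    have hb : b ∈ Subgroup.closure S := hS ▸ Subgroup.mem_top b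
    induction ha, hb using Subgroup.closure_induction₂ with
    | mem s t hs ht =>
      rw [← commutatorElement_eq_one_iff_commute, ← map_commutatorElement,
        QuotientGroup.mk'_apply, QuotientGroup.eq_one_iff]
      exact h s hs t ht
    | one_left => simp
    | one_right => simp
    | mul_left _ _ _ _ _ _ h₁ h₂ => rw [map_mul]; exact h₁.mul_left h₂
    | mul_right _ _ _ _ _ _ h₁ h₂ => rw [map_mul]; exact h₁.mul_right h₂
    | inv_left _ _ _ _ h => rw [map_inv]; exact h.inv_left
    | inv_right _ _ _ _ h => rw [map_inv]; exact h.inv_right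
  rw [commutator_def, Subgroup.commutator_le]
  rintro a - b -
  rw [← QuotientGroup.eq_one_iff, ← QuotientGroup.mk'_apply, map_commutatorElement,
    commutatorElement_eq_one_iff_commute]
  exact hπ a b

variable {K : Subgroup G} {g x : G}

lemma inv_zpow_mul_mem_ker {H : Type*} [Group H] {f : G →* H} {u : G} {m : ℤ}
    (h : f u = f g ^ m) : (g ^ m)⁻¹ * u ∈ f.ker := by
  rw [MonoidHom.mem_ker, map_mul, map_inv, map_zpow, h, inv_mul_cancel]

lemma commute_of_map_eq_zpow {H : Type*} [Group H] {f : G →* H}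
    (hf : f.ker ≤ Subgroup.center G) {m : ℤ} (h : f x = f g ^ m) : Commute g x := by
  have hc := Subgroup.mem_center_iff.mp (hf (inv_zpow_mul_mem_ker h)) g
  rw [← mul_inv_cancel_left (g ^ m) x]
  exact (Commute.self_zpow g m).mul_right hc

lemma injective_zpow_mul (hfree : ∀ m : ℤ, g ^ m ∈ K → m = 0) :
    Function.Injective fun q : ℤ × K => g ^ q.1 * (q.2 : G) := by
  rintro ⟨m, c⟩ ⟨m', c'⟩ h
  dsimp only at h
  have hdiff : (g ^ m')⁻¹ * g ^ m = (c' : G) * (c : G)⁻¹ := by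
    rw [inv_mul_eq_iff_eq_mul, ← mul_assoc, ← h, mul_inv_cancel_right]
  have hm : -m' + m = 0 :=
    hfree _ (by rw [zpow_add, zpow_neg, hdiff]; exact mul_mem c'.2 (inv_mem c.2))
  obtain rfl : m = m' := by omega
  exact Prod.ext rfl (Subtype.ext (mul_left_cancel h))

lemma range_zpow_mul_eq_centralizer (hK : K ≤ Subgroup.center G) (hgx : Commute g x)
    (hcent : ∀ u, Commute u x → ∃ m : ℤ, (g ^ m)⁻¹ * u ∈ K) :
    Set.range (fun q : ℤ × K => g ^ q.1 * (q.2 : G)) = Subgroup.centralizer {x} := by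
  ext u
  rw [SetLike.mem_coe, Subgroup.mem_centralizer_singleton_iff]
  constructor
  · rintro ⟨⟨m, c⟩, rfl⟩
    exact ((hgx.zpow_left m).mul_left (Subgroup.mem_center_iff.mp (hK c.2) x).symm).eq
  · intro hu
    obtain ⟨m, hm⟩ := hcent u hu
    exact ⟨(m, ⟨_, hm⟩), mul_inv_cancel_left _ _⟩

noncomputable def zpowMulEquivCentralizer (hK : K ≤ Subgroup.center G)
    (hfree : ∀ m : ℤ, g ^ m ∈ K → m = 0) (hgx : Commute g x)
    (hcent : ∀ u, Commute u x → ∃ m : ℤ, (g ^ m)⁻¹ * u ∈ K) :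
    Multiplicative ℤ × K ≃* Subgroup.centralizer {x} :=
  have hrange := range_zpow_mul_eq_centralizer hK hgx hcent
  MulEquiv.ofBijective
    (((zpowersHom G g).noncommCoprod K.subtype fun _ c =>
        Subgroup.mem_center_iff.mp (hK c.2) _).codRestrict _ fun q => by
      rw [← SetLike.mem_coe, ← hrange]
      exact ⟨(q.1.toAdd, q.2), rfl⟩)
    ⟨fun a b h => by
      have := injective_zpow_mul hfree (congrArg Subtype.val h)
      exact Prod.ext (congrArg Prod.fst this) (congrArg Prod.snd this),
    fun ⟨u, hu⟩ => by
      rw [← SetLike.mem_coe, ← hrange] at hu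
      obtain ⟨⟨m, c⟩, rfl⟩ := hu
      exact ⟨(.ofAdd m, c), rfl⟩⟩

end

lemma cross_mul_eq_of_ne_colour {ι κ R : Type*} [CommRing R] [IsDomain R] (c : ι → κ)
    {a z : ι → R} (h : ∀ i j, c i ≠ c j → a i * z j = z i * a j) {v₁ v₂ : ι}
    (hne : c v₁ ≠ c v₂) (hz₂ : z v₂ ≠ 0) (i : ι) : a i * z v₁ = z i * a v₁ := by
  by_cases hc : c i = c v₁
  · have h₁ := h i v₂ (hc ▸ hne)
    have h₂ := h v₁ v₂ hne
    refine mul_right_cancel₀ hz₂ ?_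
    linear_combination z v₁ * h₁ - z i * h₂
  · exact h i v₁ hc

lemma exists_eq_smul_div_gcd {ι : Type*} [Fintype ι] {a z : ι → ℤ} {i₀ : ι} (hz : z i₀ ≠ 0)
    (h : ∀ i, a i * z i₀ = z i * a i₀) : ∃ m : ℤ, a = m • fun i => z i / Finset.univ.gcd z := by
  set d := Finset.univ.gcd z
  have hdvd (i : ι) : d ∣ z i := Finset.gcd_dvd (Finset.mem_univ i)
  have hz_dvd : z i₀ ∣ a i₀ * d := by
    have h₁ : z i₀ ∣ Finset.univ.gcd fun i => a i₀ * z i :=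
      Finset.dvd_gcd fun i _ => ⟨a i, by linear_combination -h i⟩
    rw [Finset.gcd_mul_left] at h₁
    exact h₁.trans (mul_dvd_mul_right (normalize_dvd_iff.mpr dvd_rfl) d)
  refine ⟨a i₀ * d / z i₀, funext fun i => mul_left_cancel₀ hz ?_⟩
  simp only [Pi.smul_apply, smul_eq_mul]
  calc z i₀ * a i = a i₀ * d * (z i / d) := by
        rw [mul_assoc, Int.mul_ediv_cancel' (hdvd i)]; linear_combination h i
    _ = z i₀ * (a i₀ * d / z i₀ * (z i / d)) := by
        rw [← mul_assoc, Int.mul_ediv_cancel' hz_dvd]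

namespace GraphGroup

variable {V : Type} [LinearOrder V] {Γ : SimpleGraph V}

/-- `ℤ^V × ℤ^{non-edges}` with the bilinear cocycle `(u, v) ↦ (p ↦ u_j v_i)` for `p = (i, j)`,
chosen so that `⁅(e_j, 0), (e_i, 0)⁆ = (0, e_p)` mirrors the relation `⁅x_j, x_i⁆ = y_p`. -/
@[ext] structure Model (Γ : SimpleGraph V) where
  a : V → ℤ
  b : NonEdge Γ → ℤ

namespace Model

instance : Mul (Model Γ) := ⟨fun u v => ⟨u.a + v.a, u.b + v.b + fun p => u.a p.1.2 * v.a p.1.1⟩⟩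
instance : One (Model Γ) := ⟨⟨0, 0⟩⟩
instance : Inv (Model Γ) := ⟨fun u => ⟨-u.a, -u.b + fun p => u.a p.1.2 * u.a p.1.1⟩⟩

@[simp] lemma mul_a (u v : Model Γ) : (u * v).a = u.a + v.a := rfl
@[simp] lemma mul_b (u v : Model Γ) :
    (u * v).b = u.b + v.b + fun p => u.a p.1.2 * v.a p.1.1 := rfl
@[simp] lemma one_a : (1 : Model Γ).a = 0 := rfl
@[simp] lemma one_b : (1 : Model Γ).b = 0 := rfl
@[simp] lemma inv_a (u : Model Γ) : u⁻¹.a = -u.a := rfl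
@[simp] lemma inv_b (u : Model Γ) : u⁻¹.b = -u.b + fun p => u.a p.1.2 * u.a p.1.1 := rfl

instance : Group (Model Γ) where
  mul_assoc u v w := by
    ext
    · simp [add_assoc]
    · simp; ring
  one_mul u := by ext <;> simp
  mul_one u := by ext <;> simp
  inv_mul_cancel u := by ext <;> simp

lemma commutatorElement_eq (u v : Model Γ) :
    ⁅u, v⁆ = ⟨0, fun p => u.a p.1.2 * v.a p.1.1 - v.a p.1.2 * u.a p.1.1⟩ := by
  rw [commutatorElement_def]
  ext
  · simp
  · simp; ring

lemma mul_eq_mul_of_commute {u v : Model Γ} (h : Commute u v) {i j : V} (hne : i ≠ j)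
    (hij : ¬Γ.Adj i j) : u.a i * v.a j = v.a i * u.a j := by
  have cross (p : NonEdge Γ) : u.a p.1.2 * v.a p.1.1 = v.a p.1.2 * u.a p.1.1 := by
    have := congrFun (congrArg Model.b (commutatorElement_eq_one_iff_commute.mpr h)) p
    rw [commutatorElement_eq] at this
    exact sub_eq_zero.mp this
  rcases hne.lt_or_gt with hlt | hgt
  · linear_combination -cross ⟨(i, j), hlt, hij⟩
  · exact cross ⟨(j, i), hgt, fun h => hij h.symm⟩

def fstHom : Model Γ →* Multiplicative (V → ℤ) where
  toFun u := .ofAdd u.a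
  map_one' := rfl
  map_mul' _ _ := rfl

def ofB : (NonEdge Γ → Multiplicative ℤ) →* Model Γ where
  toFun t := ⟨0, fun p => (t p).toAdd⟩
  map_one' := rfl
  map_mul' _ _ := by ext <;> simp

lemma ofB_injective : Function.Injective (ofB (Γ := Γ)) := fun _ _ h =>
  funext fun p => congrFun (congrArg Model.b h) p

end Model

noncomputable def toModel (Γ : SimpleGraph V) : GraphGroup Γ →* Model Γ :=
  PresentedGroup.toGroup
    (f := Sum.elim (fun i => ⟨Pi.single i 1, 0⟩) (fun p => ⟨0, Pi.single p 1⟩)) <| by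
    rintro r (⟨i, j, hadj, rfl⟩ | ⟨p, rfl⟩ | ⟨l, p, rfl⟩)
    · simp only [map_commutatorElement, FreeGroup.lift_apply_of, Sum.elim_inl,
        Model.commutatorElement_eq]
      ext q
      · rfl
      · have hq := q.2.2
        simp only [Pi.single_apply, Model.one_b, Pi.zero_apply]
        grind [SimpleGraph.Adj.symm]
    · simp only [map_mul, map_inv, map_commutatorElement, FreeGroup.lift_apply_of, Sum.elim_inl,
        Sum.elim_inr, Model.commutatorElement_eq, mul_inv_eq_one]
      ext q
      · rfl
      · have hq := q.2.1
        have hp := p.2.1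
        simp only [Pi.single_apply, Subtype.ext_iff, Prod.ext_iff]
        grind
    · simp only [map_commutatorElement, FreeGroup.lift_apply_of, Sum.elim_inl, Sum.elim_inr,
        Model.commutatorElement_eq]
      ext <;> simp

@[simp] lemma toModel_xg (i : V) : toModel Γ (xg Γ i) = ⟨Pi.single i 1, 0⟩ :=
  PresentedGroup.toGroup.of _

@[simp] lemma toModel_yg (p : NonEdge Γ) : toModel Γ (yg Γ p) = ⟨0, Pi.single p 1⟩ :=
  PresentedGroup.toGroup.of _

lemma mk_eq_one_of_mem_rels {r : FreeGroup (GraphGens Γ)} (hr : r ∈ GraphRels Γ) :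
    PresentedGroup.mk (GraphRels Γ) r = 1 :=
  (QuotientGroup.eq_one_iff r).2 (Subgroup.subset_normalClosure hr)

lemma commute_xg_of_adj {i j : V} (h : Γ.Adj i j) : Commute (xg Γ j) (xg Γ i) := by
  have := mk_eq_one_of_mem_rels (Γ := Γ) (Or.inl ⟨i, j, h, rfl⟩)
  rwa [map_commutatorElement, commutatorElement_eq_one_iff_commute] at this

lemma commutatorElement_xg (p : NonEdge Γ) : ⁅xg Γ p.1.2, xg Γ p.1.1⁆ = yg Γ p := by
  have := mk_eq_one_of_mem_rels (Γ := Γ) (Or.inr (Or.inl ⟨p, rfl⟩))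
  rwa [map_mul, map_inv, map_commutatorElement, mul_inv_eq_one] at this

lemma commute_xg_yg (l : V) (p : NonEdge Γ) : Commute (xg Γ l) (yg Γ p) := by
  have := mk_eq_one_of_mem_rels (Γ := Γ) (Or.inr (Or.inr ⟨l, p, rfl⟩))
  rwa [map_commutatorElement, commutatorElement_eq_one_iff_commute] at this

lemma yg_mem_center (p : NonEdge Γ) : yg Γ p ∈ Subgroup.center (GraphGroup Γ) := by
  rw [Subgroup.center_eq_iInf (PresentedGroup.closure_range_of _)]
  simp only [Subgroup.mem_iInf, Subgroup.mem_centralizer_singleton_iff]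
  rintro _ ⟨l | q, rfl⟩
  · exact (commute_xg_yg l p).symm.eq
  · have h₂ := (commute_xg_yg q.1.2 p).symm
    have h₁ := (commute_xg_yg q.1.1 p).symm
    change yg Γ p * yg Γ q = yg Γ q * yg Γ p
    rw [← commutatorElement_xg q, commutatorElement_def]
    exact (((h₂.mul_right h₁).mul_right h₂.inv_right).mul_right h₁.inv_right).eq

lemma yg_mem_commutator (p : NonEdge Γ) : yg Γ p ∈ commutator (GraphGroup Γ) := by
  rw [← commutatorElement_xg p, commutator_def]
  exact Subgroup.commutator_mem_commutator (Subgroup.mem_top _) (Subgroup.mem_top _)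

lemma commutatorElement_xg_mem {N : Subgroup (GraphGroup Γ)} (hN : ∀ p, yg Γ p ∈ N) (i j : V) :
    ⁅xg Γ j, xg Γ i⁆ ∈ N := by
  wlog hij : i < j generalizing i j
  · rcases (not_lt.mp hij).eq_or_lt with rfl | hji
    · rw [commutatorElement_self]; exact one_mem N
    · rw [← commutatorElement_inv]; exact inv_mem (this j i hji)
  by_cases hadj : Γ.Adj i j
  · rw [commutatorElement_eq_one_iff_commute.mpr (commute_xg_of_adj hadj)]; exact one_mem N
  · exact commutatorElement_xg ⟨(i, j), hij, hadj⟩ ▸ hN _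

lemma commutator_le {N : Subgroup (GraphGroup Γ)} [N.Normal] (hN : ∀ p, yg Γ p ∈ N) :
    commutator (GraphGroup Γ) ≤ N := by
  refine commutator_le_of_closure_eq_top (PresentedGroup.closure_range_of _) N ?_
  have h_one {u v : GraphGroup Γ} (h : Commute u v) : ⁅u, v⁆ ∈ N :=
    commutatorElement_eq_one_iff_commute.mpr h ▸ one_mem N
  rintro _ ⟨i | p, rfl⟩ _ ⟨j | q, rfl⟩
  · exact commutatorElement_xg_mem hN j i
  · exact h_one (commute_xg_yg i q)
  · exact h_one (commute_xg_yg j p).symm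
  · exact h_one (Subgroup.mem_center_iff.mp (yg_mem_center q) (yg Γ p))

lemma commutator_le_center : commutator (GraphGroup Γ) ≤ Subgroup.center (GraphGroup Γ) :=
  commutator_le yg_mem_center

noncomputable def exponents (Γ : SimpleGraph V) : GraphGroup Γ →* Multiplicative (V → ℤ) :=
  Model.fstHom.comp (toModel Γ)

@[simp] lemma exponents_xg (i : V) : exponents Γ (xg Γ i) = .ofAdd (Pi.single i 1) := by
  simp [exponents, Model.fstHom]

@[simp] lemma exponents_yg (p : NonEdge Γ) : exponents Γ (yg Γ p) = 1 := by
  simp [exponents, Model.fstHom]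

lemma exponents_mul_eq_of_commute {u v : GraphGroup Γ} (h : Commute u v) {i j : V} (hne : i ≠ j)
    (hij : ¬Γ.Adj i j) :
    (exponents Γ u).toAdd i * (exponents Γ v).toAdd j =
      (exponents Γ v).toAdd i * (exponents Γ u).toAdd j :=
  Model.mul_eq_mul_of_commute (h.map (toModel Γ)) hne hij

lemma ker_exponents [Fintype V] : (exponents Γ).ker = commutator (GraphGroup Γ) := by
  refine le_antisymm ?_ (Abelianization.commutator_subset_ker _)
  let ρ : Multiplicative (V → ℤ) →* Abelianization (GraphGroup Γ) :=
    { toFun a := ∏ v, Abelianization.of (xg Γ v) ^ a.toAdd v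
      map_one' := by simp
      map_mul' a b := by simp [Finset.prod_mul_distrib, zpow_add] }
  have hρ : ρ.comp (exponents Γ) = Abelianization.of := by
    refine PresentedGroup.ext ?_
    rintro (i | p)
    · change ρ (exponents Γ (xg Γ i)) = Abelianization.of (xg Γ i)
      simp [ρ, Pi.single_apply]
    · change ρ (exponents Γ (yg Γ p)) = Abelianization.of (yg Γ p)
      rw [exponents_yg, map_one, eq_comm, ← MonoidHom.mem_ker, Abelianization.ker_of]
      exact yg_mem_commutator p
  intro u hu
  rw [← Abelianization.ker_of, MonoidHom.mem_ker, ← hρ, MonoidHom.comp_apply, hu, map_one]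

lemma pairwise_commute_zpowersHom_yg :
    Pairwise fun p q => ∀ m k : Multiplicative ℤ,
      Commute (zpowersHom _ (yg Γ p) m) (zpowersHom _ (yg Γ q) k) := fun _ q _ _ _ =>
  Subgroup.mem_center_iff.mp (zpow_mem (yg_mem_center q) _) _

section yProd

variable [Fintype (NonEdge Γ)]

noncomputable def yProd (Γ : SimpleGraph V) [Fintype (NonEdge Γ)] :
    (NonEdge Γ → Multiplicative ℤ) →* GraphGroup Γ :=
  MonoidHom.noncommPiCoprod (fun p => zpowersHom _ (yg Γ p)) pairwise_commute_zpowersHom_yg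

lemma yProd_mulSingle (p : NonEdge Γ) (m : Multiplicative ℤ) :
    yProd Γ (Pi.mulSingle p m) = yg Γ p ^ m.toAdd := by
  rw [yProd, MonoidHom.noncommPiCoprod_mulSingle]
  rfl

lemma toModel_comp_yProd : (toModel Γ).comp (yProd Γ) = Model.ofB := by
  refine MonoidHom.pi_ext fun p m => ?_
  have h : toModel Γ (yg Γ p) = Model.ofB (Pi.mulSingle p (.ofAdd 1)) := by
    ext q
    · rfl
    · simp [Model.ofB, Pi.mulSingle_apply, Pi.single_apply, apply_ite]
  rw [MonoidHom.comp_apply, yProd_mulSingle, map_zpow, h, ← map_zpow, ← Pi.mulSingle_zpow,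
    ← ofAdd_zsmul, smul_eq_mul, mul_one, ofAdd_toAdd]

lemma yProd_injective : Function.Injective (yProd Γ) := fun s t h =>
  Model.ofB_injective <| by
    rw [← toModel_comp_yProd, MonoidHom.comp_apply, MonoidHom.comp_apply, h]

lemma range_yProd_le {N : Subgroup (GraphGroup Γ)} (hN : ∀ p, yg Γ p ∈ N) :
    (yProd Γ).range ≤ N := by
  rw [yProd, MonoidHom.noncommPiCoprod_range]
  exact iSup_le fun p => (Subgroup.zpowers_le).mpr (hN p)

lemma range_yProd : (yProd Γ).range = commutator (GraphGroup Γ) := by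
  refine le_antisymm (range_yProd_le yg_mem_commutator) ?_
  have := Subgroup.normal_of_le_center (range_yProd_le (Γ := Γ) yg_mem_center)
  exact commutator_le fun p =>
    ⟨Pi.mulSingle p (.ofAdd 1), by rw [yProd_mulSingle]; exact zpow_one _⟩

end yProd

noncomputable def commutatorMulEquiv [Finite V] :
    commutator (GraphGroup Γ) ≃* (NonEdge Γ → Multiplicative ℤ) :=
  letI := Fintype.ofFinite (NonEdge Γ)
  ((MonoidHom.ofInjective yProd_injective).trans (MulEquiv.subgroupCongr range_yProd)).symm

lemma exponents_prod_finRange {n : ℕ} {Γ : SimpleGraph (Fin n)} (a : Fin n → ℤ) :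
    exponents Γ ((List.finRange n).map fun v => xg Γ v ^ a v).prod = .ofAdd a := by
  rw [map_list_prod, List.map_map, ← Fin.prod_univ_def]
  simp only [Function.comp_def, map_zpow, exponents_xg, ← ofAdd_zsmul, ← ofAdd_sum,
    ← Pi.single_smul', smul_eq_mul, mul_one, Finset.univ_sum_single]

end GraphGroup

noncomputable def optionFinsuppMulEquiv (ι : Type*) [Finite ι] :
    Multiplicative (Option ι →₀ ℤ) ≃* Multiplicative ℤ × (ι → Multiplicative ℤ) :=
  ((Finsupp.linearEquivFunOnFinite ℤ ℤ (Option ι)).trans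
      (LinearEquiv.piOptionEquivProd ℤ)).toAddEquiv.toMultiplicative.trans <|
    (MulEquiv.prodMultiplicative _ _).trans <|
      MulEquiv.prodCongr (MulEquiv.refl _) (MulEquiv.funMultiplicative ι ℤ)

open GraphGroup

/-- Let `Γ` be the disjoint union of its parts along the component map `c` (no edges
between different parts).  For `x = ∏_v x_v^{z_v} · w` (with `w` a product of powers of the
`y_l`) having nonzero exponents in two different components, and `d` the gcd of the
exponents, the centralizer of `x` is the internal direct product of the infinite cyclic
subgroup generated by `g = ∏_v x_v^{z_v/d}` with `γ₂(G_Γ)`, and it is free abelian of rank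
`N + 1`. -/
theorem centralizer_in_disjoint_union_graphGroup
    {n : ℕ} (Γ : SimpleGraph (Fin n))
    (k : ℕ) (c : Fin n → Fin k) (hdisj : ∀ a b, Γ.Adj a b → c a = c b)
    (z : Fin n → ℤ) (w : GraphGroup Γ) (hw : w ∈ Subgroup.closure (Set.range (yg Γ)))
    (v₁ v₂ : Fin n) (hne : c v₁ ≠ c v₂) (hz₁ : z v₁ ≠ 0) (hz₂ : z v₂ ≠ 0)
    (x : GraphGroup Γ)
    (hx : x = ((List.finRange n).map fun v => xg Γ v ^ z v).prod * w)
    (d : ℤ) (hd : d = Finset.univ.gcd z)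
    (g : GraphGroup Γ)
    (hg : g = ((List.finRange n).map fun v => xg Γ v ^ (z v / d)).prod) :
    Function.Injective
      (fun q : ℤ × commutator (GraphGroup Γ) => g ^ q.1 * (q.2 : GraphGroup Γ)) ∧
    Set.range (fun q : ℤ × commutator (GraphGroup Γ) => g ^ q.1 * (q.2 : GraphGroup Γ)) =
      (Subgroup.centralizer {x} : Set (GraphGroup Γ)) ∧
    Nonempty (Multiplicative (Option (NonEdge Γ) →₀ ℤ) ≃* Subgroup.centralizer {x}) := by
  have hker : (exponents Γ).ker = commutator (GraphGroup Γ) := ker_exponents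
  have hK := commutator_le_center (Γ := Γ)
  have hz : z = d • fun v => z v / d :=
    funext fun v => (Int.mul_ediv_cancel' (hd ▸ Finset.gcd_dvd (Finset.mem_univ v))).symm
  have hg_exp : exponents Γ g = .ofAdd fun v => z v / d := hg ▸ exponents_prod_finRange _
  have hx_exp : exponents Γ x = .ofAdd z := by
    have hw' : w ∈ (exponents Γ).ker :=
      hker ▸ (Subgroup.closure_le _).mpr (Set.range_subset_iff.mpr yg_mem_commutator) hw
    rw [hx, map_mul, exponents_prod_finRange, hw', mul_one]
  have hfree (m : ℤ) (hm : g ^ m ∈ commutator (GraphGroup Γ)) : m = 0 := by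
    rw [← hker, MonoidHom.mem_ker, map_zpow, hg_exp, ← ofAdd_zsmul, ofAdd_eq_one] at hm
    refine (mul_eq_zero.mp (congrFun hm v₁)).resolve_right fun h => hz₁ ?_
    rw [hz, Pi.smul_apply, smul_eq_mul, show z v₁ / d = 0 from h, mul_zero]
  have hgx : Commute g x :=
    commute_of_map_eq_zpow (hker ▸ hK) (m := d) (by rw [hx_exp, hg_exp, ← ofAdd_zsmul, ← hz])
  have hcent (u : GraphGroup Γ) (hu : Commute u x) :
      ∃ m : ℤ, (g ^ m)⁻¹ * u ∈ commutator (GraphGroup Γ) := by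
    have hcross (i j : Fin n) (hc : c i ≠ c j) :
        (exponents Γ u).toAdd i * z j = z i * (exponents Γ u).toAdd j := by
      simpa [hx_exp] using exponents_mul_eq_of_commute hu (ne_of_apply_ne c hc)
        fun h => hc (hdisj i j h)
    obtain ⟨m, hm⟩ := exists_eq_smul_div_gcd hz₁ (cross_mul_eq_of_ne_colour c hcross hne hz₂)
    refine ⟨m, hker ▸ inv_zpow_mul_mem_ker ?_⟩
    rw [hg_exp, ← ofAdd_zsmul, hd, ← hm, ofAdd_toAdd]
  refine ⟨injective_zpow_mul hfree, range_zpow_mul_eq_centralizer hK hgx hcent, ⟨?_⟩⟩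
  exact (optionFinsuppMulEquiv _).trans <|
    (MulEquiv.prodCongr (MulEquiv.refl _) commutatorMulEquiv.symm).trans <|
      zpowMulEquivCentralizer hK hfree hgx hcent
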